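/- Let G be a graph and v a vertex of degree d ≥ 2 with neighbourhood {u_1,…,u_d}. Let F(G,v) be the graph obtained by deleting the d edges incident to v, adding 2d new vertices p_1,…,p_d, q_1,…,q_d, and adding edges: v–q_i for all i, p_i–q_j for all i ≠ j, and p_i–u_i for all i. Then G is a nut graph if and only if F(G,v) is a nut graph. -/

import Mathlib

/-!
Let `x̂ = fowlerLift v u x` agree with `x` off `v`, with `x̂ v = (1 - d) x v`, `x̂ (p i) = x v`
and `x̂ (q i) = x (u i)`. Then `x ↦ x̂` maps the kernel of `A(G)` linearly onto that of
`A(F(G, v))`: the rows at the `q i` force all `p i` to share one value `a` and `v` to carry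
`(1 - d) a`, and the rows at `v` and at the `p i` force `q i` to carry the value at `u i`, so every
kernel vector of `F(G, v)` is the lift of its restriction to `G`. As `1 - d ≠ 0`, full support is
preserved both ways. For connectivity, the edge `v – u i` becomes the path `v – q j – p i – u i`
for any `j ≠ i`, while contracting `p i` into `u i` and `q i` into `v` turns edges of `F(G, v)`
into walks of `G`.
-/

open Matrix

attribute [local instance] Classical.propDecidable

/-- A nut graph: a connected simple graph whose adjacency matrix has a
one-dimensional kernel spanned by a vector with all entries nonzero. -/
def IsNutGraph {V : Type*} [Fintype V] (G : SimpleGraph V) : Prop :=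
  G.Connected ∧ ∃ x : V → ℝ,
    G.adjMatrix ℝ *ᵥ x = 0 ∧ (∀ v, x v ≠ 0) ∧
    ∀ y : V → ℝ, G.adjMatrix ℝ *ᵥ y = 0 → ∃ c : ℝ, y = c • x

/-- The Fowler construction `F(G, v)`: given a vertex `v` whose neighbours are
`u 0, …, u (d-1)`, delete the `d` edges incident with `v`, add `2d` new
vertices `p i = inr (i, 0)` and `q i = inr (i, 1)`, and add the edges
`v–(q i)` for all `i`, `(p i)–(q j)` for all `i ≠ j`, and `(p i)–(u i)`
for all `i`. -/
def fowlerExt {V : Type*} (G : SimpleGraph V) (v : V) (d : ℕ) (u : Fin d → V) :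
    SimpleGraph (V ⊕ Fin d × Fin 2) where
  Adj a b := match a, b with
    | Sum.inl a, Sum.inl b => G.Adj a b ∧ a ≠ v ∧ b ≠ v
    | Sum.inl a, Sum.inr (i, c) => (a = v ∧ c = 1) ∨ (a = u i ∧ c = 0)
    | Sum.inr (i, c), Sum.inl a => (a = v ∧ c = 1) ∨ (a = u i ∧ c = 0)
    | Sum.inr (i, c), Sum.inr (j, c') => i ≠ j ∧ c ≠ c'
  symm := by
    constructor
    rintro (a | ⟨i, c⟩) (b | ⟨j, c'⟩) h
    · exact ⟨h.1.symm, h.2.2, h.2.1⟩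
    · exact h
    · exact h
    · exact ⟨h.1.symm, h.2.symm⟩
  loopless := by
    constructor
    rintro (a | ⟨i, c⟩) h
    · exact G.ne_of_adj h.1 rfl
    · exact h.1 rfl

open Finset

section NutKernel

variable {K : Type*} [Semiring K]

def HasNutKernel {n : Type*} [Fintype n] (A : Matrix n n K) : Prop :=
  ∃ x : n → K, A *ᵥ x = 0 ∧ (∀ i, x i ≠ 0) ∧ ∀ y, A *ᵥ y = 0 → ∃ c : K, y = c • x

theorem HasNutKernel.of_linearMap {m n : Type*} [Fintype m] [Fintype n] {A : Matrix m m K}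
    {B : Matrix n n K} (hA : HasNutKernel A) (E : (m → K) →ₗ[K] n → K)
    (hE : ∀ x, A *ᵥ x = 0 → B *ᵥ E x = 0) (hsurj : ∀ y, B *ᵥ y = 0 → ∃ x, A *ᵥ x = 0 ∧ E x = y)
    (hne : ∀ x, (∀ i, x i ≠ 0) → ∀ j, E x j ≠ 0) : HasNutKernel B := by
  obtain ⟨x, hx, hx0, hspan⟩ := hA
  refine ⟨E x, hE x hx, hne x hx0, fun y hy => ?_⟩
  obtain ⟨x', hx', rfl⟩ := hsurj y hy
  obtain ⟨c, rfl⟩ := hspan x' hx'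
  exact ⟨c, map_smul E c x⟩

end NutKernel

theorem isNutGraph_iff {V : Type*} [Fintype V] (G : SimpleGraph V) :
    IsNutGraph G ↔ G.Connected ∧ HasNutKernel (G.adjMatrix ℝ) :=
  Iff.rfl

namespace SimpleGraph

variable {K V : Type*} [NonAssocSemiring K] {G : SimpleGraph V}

theorem adjMatrix_mulVec_apply_eq_sum_ite [Fintype V] [DecidableRel G.Adj] (x : V → K) (a : V) :
    (G.adjMatrix K *ᵥ x) a = ∑ b, if G.Adj a b then x b else 0 := by
  simp [mulVec, dotProduct, adjMatrix_apply, ite_mul]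

variable {v : V} {d : ℕ} {u : Fin d → V}

theorem neighborFinset_eq_map [Fintype V] (hu : Function.Injective u)
    (hN : ∀ w, G.Adj v w ↔ ∃ i, u i = w) : G.neighborFinset v = univ.map ⟨u, hu⟩ := by
  ext w
  simp [hN]

theorem adjMatrix_mulVec_apply_eq_sum_comp [Fintype V] (hu : Function.Injective u)
    (hN : ∀ w, G.Adj v w ↔ ∃ i, u i = w) (x : V → K) :
    (G.adjMatrix K *ᵥ x) v = ∑ i, x (u i) := by
  rw [adjMatrix_mulVec_apply, neighborFinset_eq_map hu hN, sum_map]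
  rfl

theorem sum_ite_eq_ite_adj (hu : Function.Injective u) (hN : ∀ w, G.Adj v w ↔ ∃ i, u i = w)
    (a : V) (c : K) : (∑ i, if a = u i then c else 0) = if G.Adj v a then c else 0 := by
  by_cases ha : G.Adj v a
  · obtain ⟨i, rfl⟩ := (hN _).1 ha
    simp [ha, hu.eq_iff]
  · have : ∀ i, a ≠ u i := fun i hi => ha ((hN a).2 ⟨i, hi.symm⟩)
    simp [ha, this]

theorem Reachable.lift {W : Type*} {H : SimpleGraph W} (f : V → W)
    (hf : ∀ a b, G.Adj a b → H.Reachable (f a) (f b)) {a b : V} (h : G.Reachable a b) :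
    H.Reachable (f a) (f b) := by
  rw [reachable_iff_reflTransGen] at h ⊢
  exact Relation.ReflTransGen.lift' f
    (fun a b hab => (reachable_iff_reflTransGen _ _).1 (hf a b hab)) a b h

end SimpleGraph

section FowlerVectors

variable {K V : Type*} [CommRing K] {v : V} {d : ℕ}

noncomputable def fowlerLift (v : V) (u : Fin d → V) :
    (V → K) →ₗ[K] (V ⊕ Fin d × Fin 2 → K) where
  toFun x := Sum.elim (fun w => if w = v then (1 - d) * x v else x w)
    (fun p => if p.2 = 0 then x v else x (u p.1))
  map_add' x y := by
    ext (w | ⟨i, c⟩) <;> simp only [Pi.add_apply, Sum.elim_inl, Sum.elim_inr] <;> split_ifs <;> ring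
  map_smul' c x := by
    ext (w | ⟨i, c⟩) <;> simp only [Pi.smul_apply, Sum.elim_inl, Sum.elim_inr, smul_eq_mul,
      RingHom.id_apply] <;> split_ifs <;> ring

/-- In a kernel vector of `F(G, v)` all the `p i` carry the same value, so any `i₀` will do. -/
noncomputable def fowlerRestrict (v : V) (i₀ : Fin d) :
    (V ⊕ Fin d × Fin 2 → K) →ₗ[K] (V → K) where
  toFun y w := if w = v then y (.inr (i₀, 0)) else y (.inl w)
  map_add' x y := by ext w; simp only [Pi.add_apply]; split_ifs <;> rfl
  map_smul' c x := by ext w; simp only [Pi.smul_apply, RingHom.id_apply]; split_ifs <;> rfl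

variable (u : Fin d → V) (x : V → K) (i : Fin d)

@[simp] theorem fowlerLift_inl_self : fowlerLift v u x (.inl v) = (1 - d) * x v := if_pos rfl

@[simp] theorem fowlerLift_inl_of_ne {w : V} (hw : w ≠ v) : fowlerLift v u x (.inl w) = x w :=
  if_neg hw

@[simp] theorem fowlerLift_inr_zero : fowlerLift v u x (.inr (i, 0)) = x v := by
  simp [fowlerLift]

@[simp] theorem fowlerLift_inr_one : fowlerLift v u x (.inr (i, 1)) = x (u i) := by
  simp [fowlerLift]

@[simp] theorem fowlerRestrict_self (y : V ⊕ Fin d × Fin 2 → K) :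
    fowlerRestrict v i y v = y (.inr (i, 0)) := if_pos rfl

@[simp] theorem fowlerRestrict_of_ne (y : V ⊕ Fin d × Fin 2 → K) {w : V} (hw : w ≠ v) :
    fowlerRestrict v i y w = y (.inl w) := if_neg hw

theorem fowlerRestrict_fowlerLift : fowlerRestrict v i (fowlerLift v u x) = x := by
  ext w
  by_cases hw : w = v
  · subst hw; simp
  · simp [hw]

theorem fowlerLift_ne_zero [NoZeroDivisors K] (hd : (1 - d : K) ≠ 0) (hx : ∀ w, x w ≠ 0)
    (t : V ⊕ Fin d × Fin 2) : fowlerLift v u x t ≠ 0 := by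
  obtain a | ⟨i, c⟩ := t
  · by_cases ha : a = v
    · subst ha; simpa using ⟨hd, hx a⟩
    · simpa [ha] using hx a
  · obtain rfl | rfl : c = 0 ∨ c = 1 := by omega
    · simpa using hx v
    · simpa using hx (u i)

theorem fowlerRestrict_ne_zero {y : V ⊕ Fin d × Fin 2 → K} (hy : ∀ t, y t ≠ 0) (w : V) :
    fowlerRestrict v i y w ≠ 0 := by
  by_cases hw : w = v
  · subst hw; simpa using hy _
  · simpa [hw] using hy _

end FowlerVectors

section FowlerRows

variable {K V : Type*} [CommRing K] (G : SimpleGraph V) (v : V) {d : ℕ} (u : Fin d → V)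

@[simp] theorem fowlerExt_adj_inl_inl {a b : V} :
    (fowlerExt G v d u).Adj (.inl a) (.inl b) ↔ G.Adj a b ∧ a ≠ v ∧ b ≠ v := Iff.rfl

@[simp] theorem fowlerExt_adj_inl_inr {a : V} {i : Fin d} {c : Fin 2} :
    (fowlerExt G v d u).Adj (.inl a) (.inr (i, c)) ↔ (a = v ∧ c = 1) ∨ (a = u i ∧ c = 0) :=
  Iff.rfl

@[simp] theorem fowlerExt_adj_inr_inl {a : V} {i : Fin d} {c : Fin 2} :
    (fowlerExt G v d u).Adj (.inr (i, c)) (.inl a) ↔ (a = v ∧ c = 1) ∨ (a = u i ∧ c = 0) :=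
  Iff.rfl

@[simp] theorem fowlerExt_adj_inr_inr {i j : Fin d} {c c' : Fin 2} :
    (fowlerExt G v d u).Adj (.inr (i, c)) (.inr (j, c')) ↔ i ≠ j ∧ c ≠ c' := Iff.rfl

variable {G v u} [Fintype V] (y : V ⊕ Fin d × Fin 2 → K)

theorem fowlerExt_mulVec_inr_zero (i : Fin d) :
    ((fowlerExt G v d u).adjMatrix K *ᵥ y) (.inr (i, 0)) =
      y (.inl (u i)) + (∑ j, y (.inr (j, 1)) - y (.inr (i, 1))) := by
  rw [SimpleGraph.adjMatrix_mulVec_apply_eq_sum_ite, Fintype.sum_sum_type, Fintype.sum_prod_type]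
  simp only [Fin.sum_univ_two]
  simp [sum_ite, filter_ne]

theorem fowlerExt_mulVec_inr_one (i : Fin d) :
    ((fowlerExt G v d u).adjMatrix K *ᵥ y) (.inr (i, 1)) =
      y (.inl v) + (∑ j, y (.inr (j, 0)) - y (.inr (i, 0))) := by
  rw [SimpleGraph.adjMatrix_mulVec_apply_eq_sum_ite, Fintype.sum_sum_type, Fintype.sum_prod_type]
  simp only [Fin.sum_univ_two]
  simp [sum_ite, filter_ne]

theorem fowlerExt_mulVec_inl_self (hv : ∀ i, u i ≠ v) :
    ((fowlerExt G v d u).adjMatrix K *ᵥ y) (.inl v) = ∑ i, y (.inr (i, 1)) := by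
  rw [SimpleGraph.adjMatrix_mulVec_apply_eq_sum_ite]
  simp [Fintype.sum_sum_type, Fintype.sum_prod_type, fun i => (hv i).symm]

theorem fowlerExt_mulVec_inl_of_ne (hu : Function.Injective u)
    (hN : ∀ w, G.Adj v w ↔ ∃ i, u i = w) {z : V → K} (hz : ∀ b ≠ v, y (.inl b) = z b)
    (hp : ∀ i, y (.inr (i, 0)) = z v) {a : V} (ha : a ≠ v) :
    ((fowlerExt G v d u).adjMatrix K *ᵥ y) (.inl a) = (G.adjMatrix K *ᵥ z) a := by
  have hsplit : ∀ b, (if G.Adj a b then z b else 0) =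
      (if G.Adj a b ∧ b ≠ v then y (.inl b) else 0) +
        if b = v then (if G.Adj a v then z v else 0) else 0 := by
    intro b
    by_cases hb : b = v
    · subst hb; simp
    · simp [hb, hz b hb]
  rw [SimpleGraph.adjMatrix_mulVec_apply_eq_sum_ite, SimpleGraph.adjMatrix_mulVec_apply_eq_sum_ite]
  simp [Fintype.sum_sum_type, Fintype.sum_prod_type, Fin.sum_univ_two, ha, hp,
    SimpleGraph.sum_ite_eq_ite_adj hu hN, hsplit, sum_add_distrib, G.adj_comm]

end FowlerRows

section FowlerKernel

variable {K V : Type*} [CommRing K] [Fintype V] {G : SimpleGraph V} {v : V} {d : ℕ}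
  {u : Fin d → V} {y : V ⊕ Fin d × Fin 2 → K}

theorem fowlerExt_kernel_inr_zero_eq (hy : (fowlerExt G v d u).adjMatrix K *ᵥ y = 0)
    (i j : Fin d) : y (.inr (i, 0)) = y (.inr (j, 0)) := by
  have hi := congrFun hy (.inr (i, 1))
  have hj := congrFun hy (.inr (j, 1))
  rw [Pi.zero_apply, fowlerExt_mulVec_inr_one] at hi hj
  linear_combination hj - hi

theorem fowlerExt_kernel_inl_self (hy : (fowlerExt G v d u).adjMatrix K *ᵥ y = 0)
    (i : Fin d) : y (.inl v) = (1 - d) * y (.inr (i, 0)) := by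
  have hi := congrFun hy (.inr (i, 1))
  rw [Pi.zero_apply, fowlerExt_mulVec_inr_one] at hi
  have hsum : ∑ j, y (.inr (j, 0)) = d * y (.inr (i, 0)) := by
    simp [fowlerExt_kernel_inr_zero_eq hy _ i]
  linear_combination hi - hsum

theorem fowlerExt_kernel_sum_inr_one (hv : ∀ i, u i ≠ v)
    (hy : (fowlerExt G v d u).adjMatrix K *ᵥ y = 0) : ∑ i, y (.inr (i, 1)) = 0 := by
  simpa [fowlerExt_mulVec_inl_self y hv] using congrFun hy (.inl v)

theorem fowlerExt_kernel_inr_one (hv : ∀ i, u i ≠ v)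
    (hy : (fowlerExt G v d u).adjMatrix K *ᵥ y = 0) (i : Fin d) :
    y (.inr (i, 1)) = y (.inl (u i)) := by
  have hi := congrFun hy (.inr (i, 0))
  rw [Pi.zero_apply, fowlerExt_mulVec_inr_zero] at hi
  linear_combination fowlerExt_kernel_sum_inr_one hv hy - hi

theorem fowlerExt_mulVec_fowlerLift_eq_zero (hu : Function.Injective u)
    (hN : ∀ w, G.Adj v w ↔ ∃ i, u i = w) {x : V → K} (hx : G.adjMatrix K *ᵥ x = 0) :
    (fowlerExt G v d u).adjMatrix K *ᵥ fowlerLift v u x = 0 := by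
  have hv : ∀ i, u i ≠ v := fun i => (G.ne_of_adj ((hN _).2 ⟨i, rfl⟩)).symm
  have hsum : ∑ i, x (u i) = 0 := by
    rw [← SimpleGraph.adjMatrix_mulVec_apply_eq_sum_comp hu hN, hx, Pi.zero_apply]
  ext (a | ⟨i, c⟩)
  · by_cases ha : a = v
    · subst ha
      simpa [fowlerExt_mulVec_inl_self _ hv, hv] using hsum
    · rw [fowlerExt_mulVec_inl_of_ne _ hu hN (fun b hb => fowlerLift_inl_of_ne u x hb)
        (fowlerLift_inr_zero u x) ha, hx, Pi.zero_apply, Pi.zero_apply]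
  · obtain rfl | rfl : c = 0 ∨ c = 1 := by omega
    · rw [fowlerExt_mulVec_inr_zero]
      simp [hv i, hsum]
    · rw [fowlerExt_mulVec_inr_one]
      simp only [fowlerLift_inl_self, fowlerLift_inr_zero, sum_const, card_univ, Fintype.card_fin,
        nsmul_eq_mul, Pi.zero_apply]
      ring

theorem adjMatrix_mulVec_fowlerRestrict_eq_zero (hu : Function.Injective u)
    (hN : ∀ w, G.Adj v w ↔ ∃ i, u i = w) (hy : (fowlerExt G v d u).adjMatrix K *ᵥ y = 0)
    (i₀ : Fin d) : G.adjMatrix K *ᵥ fowlerRestrict v i₀ y = 0 := by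
  have hv : ∀ i, u i ≠ v := fun i => (G.ne_of_adj ((hN _).2 ⟨i, rfl⟩)).symm
  ext a
  by_cases ha : a = v
  · subst ha
    simp [SimpleGraph.adjMatrix_mulVec_apply_eq_sum_comp hu hN, hv,
      ← fowlerExt_kernel_inr_one hv hy, fowlerExt_kernel_sum_inr_one hv hy]
  · rw [← fowlerExt_mulVec_inl_of_ne y hu hN (fun b hb => (fowlerRestrict_of_ne i₀ y hb).symm)
      (fun i => by rw [fowlerRestrict_self, fowlerExt_kernel_inr_zero_eq hy]) ha, hy]
    rfl

theorem fowlerLift_fowlerRestrict (hv : ∀ i, u i ≠ v)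
    (hy : (fowlerExt G v d u).adjMatrix K *ᵥ y = 0) (i₀ : Fin d) :
    fowlerLift v u (fowlerRestrict v i₀ y) = y := by
  ext (a | ⟨i, c⟩)
  · by_cases ha : a = v
    · subst ha
      simp [fowlerExt_kernel_inl_self hy i₀]
    · simp [ha]
  · obtain rfl | rfl : c = 0 ∨ c = 1 := by omega
    · simp [fowlerExt_kernel_inr_zero_eq hy i₀ i]
    · simp [hv, fowlerExt_kernel_inr_one hv hy]

end FowlerKernel

section FowlerConnected

variable {V : Type*} {G : SimpleGraph V} {v : V} {d : ℕ} {u : Fin d → V}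

theorem fowlerExt_connected (hd : 2 ≤ d) (hN : ∀ w, G.Adj v w → ∃ i, u i = w)
    (hG : G.Connected) : (fowlerExt G v d u).Connected := by
  set F := fowlerExt G v d u
  have p_reach : ∀ i, F.Reachable (.inr (i, 0)) (.inl (u i)) :=
    fun i => SimpleGraph.Adj.reachable (Or.inr ⟨rfl, rfl⟩)
  have q_reach : ∀ i, F.Reachable (.inr (i, 1)) (.inl v) :=
    fun i => SimpleGraph.Adj.reachable (Or.inl ⟨rfl, rfl⟩)
  have v_reach : ∀ i, F.Reachable (.inl v) (.inl (u i)) := by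
    intro i
    obtain ⟨j, hj⟩ := Fintype.exists_ne_of_one_lt_card (by rw [Fintype.card_fin]; omega) i
    have hqp : F.Adj (.inr (j, 1)) (.inr (i, 0)) := (fowlerExt_adj_inr_inr G v u).2 ⟨hj, by decide⟩
    exact (q_reach j).symm.trans (hqp.reachable.trans (p_reach i))
  have inl_reach : ∀ a b, G.Reachable a b → F.Reachable (.inl a) (.inl b) := by
    refine fun a b => SimpleGraph.Reachable.lift Sum.inl fun a b hab => ?_
    by_cases ha : a = v
    · subst ha; obtain ⟨i, rfl⟩ := hN b hab; exact v_reach i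
    by_cases hb : b = v
    · subst hb; obtain ⟨i, rfl⟩ := hN a hab.symm; exact (v_reach i).symm
    exact SimpleGraph.Adj.reachable ⟨hab, ha, hb⟩
  refine (SimpleGraph.connected_iff_exists_forall_reachable _).2 ⟨.inl v, ?_⟩
  rintro (a | ⟨i, c⟩)
  · exact inl_reach v a (hG.preconnected v a)
  · obtain rfl | rfl : c = 0 ∨ c = 1 := by omega
    · exact (inl_reach v (u i) (hG.preconnected v (u i))).trans (p_reach i).symm
    · exact (q_reach i).symm

theorem connected_of_fowlerExt_connected (hN : ∀ i, G.Adj v (u i))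
    (hF : (fowlerExt G v d u).Connected) : G.Connected := by
  let f : V ⊕ Fin d × Fin 2 → V := Sum.elim id fun p => if p.2 = 0 then u p.1 else v
  have hf : ∀ s t, (fowlerExt G v d u).Adj s t → G.Reachable (f s) (f t) := by
    rintro (a | ⟨i, c⟩) (b | ⟨j, c'⟩) h
    · exact h.1.reachable
    · rcases h with ⟨rfl, rfl⟩ | ⟨rfl, rfl⟩ <;> simp [f]
    · rcases h with ⟨rfl, rfl⟩ | ⟨rfl, rfl⟩ <;> simp [f]
    · obtain ⟨-, hcc⟩ := h
      obtain ⟨rfl, rfl⟩ | ⟨rfl, rfl⟩ : (c = 0 ∧ c' = 1) ∨ (c = 1 ∧ c' = 0) := by omega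
      · simpa [f] using (hN i).symm.reachable
      · simpa [f] using (hN j).reachable
  refine (SimpleGraph.connected_iff_exists_forall_reachable _).2 ⟨v, fun w => ?_⟩
  exact SimpleGraph.Reachable.lift f hf (hF.preconnected (.inl v) (.inl w))

end FowlerConnected

/-- Let `v` be a vertex of degree `d ≥ 2` of `G`, with neighbourhood
`{u 0, …, u (d-1)}`.  Then `G` is a nut graph if and only if the
Fowler construction `F(G, v)` is a nut graph. -/
theorem fowlerExt_nut_iff {V : Type*} [Fintype V] (G : SimpleGraph V) (v : V)
    (d : ℕ) (hd : 2 ≤ d) (u : Fin d → V) (hu : Function.Injective u)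
    (hN : ∀ w : V, G.Adj v w ↔ ∃ i, u i = w) :
    IsNutGraph G ↔ IsNutGraph (fowlerExt G v d u) := by
  have hv : ∀ i, u i ≠ v := fun i => (G.ne_of_adj ((hN _).2 ⟨i, rfl⟩)).symm
  have hd' : (1 - d : ℝ) ≠ 0 := by
    have : (2 : ℝ) ≤ d := by exact_mod_cast hd
    linarith
  let i₀ : Fin d := ⟨0, by omega⟩
  rw [isNutGraph_iff, isNutGraph_iff]
  refine and_congr ⟨fowlerExt_connected hd (fun w => (hN w).1),
    connected_of_fowlerExt_connected fun i => (hN _).2 ⟨i, rfl⟩⟩ ⟨fun h => ?_, fun h => ?_⟩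
  · exact h.of_linearMap (fowlerLift v u) (fun _ => fowlerExt_mulVec_fowlerLift_eq_zero hu hN)
      (fun y hy => ⟨_, adjMatrix_mulVec_fowlerRestrict_eq_zero hu hN hy i₀,
        fowlerLift_fowlerRestrict hv hy i₀⟩)
      (fun x => fowlerLift_ne_zero u x hd')
  · exact h.of_linearMap (fowlerRestrict v i₀)
      (fun _ hy => adjMatrix_mulVec_fowlerRestrict_eq_zero hu hN hy i₀)
      (fun x hx => ⟨_, fowlerExt_mulVec_fowlerLift_eq_zero hu hN hx,
        fowlerRestrict_fowlerLift u x i₀⟩)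
      (fun _ hy => fowlerRestrict_ne_zero i₀ hy)
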